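/- arXiv:2103.03320 — 2 statements merged into one kernel-verified Lean document; each statement's English description precedes it below -/
import Mathlib

section
/- Let β ∈ ℝ with β ≠ 0 and let ρ : ℝ → ℝ be the Fermi–Dirac function ρ(x) := 1/(1 + e^{−x}). Let H be a bounded selfadjoint operator on ℌ with Γ∘H∘Γ = −H, and set T := ρ(βH) via the continuous functional calculus, i.e. T = χ(H) where χ(x) := 1/(1 + e^{−βx}). Then: (i) if T ∘ U_φ = U_φ ∘ T for all φ ∈ ℝ, there exists a bounded selfadjoint operator h on 𝔥 such that H(f, g) = (hf, −ζ(h(ζg))) for all (f, g) ∈ ℌ; (ii) conversely, if H(f, g) = (hf, −ζ(h(ζg))) for a bounded selfadjoint h on 𝔥, then T(f, g) = ((1 − s)f, ζ(s(ζg))) for all (f, g) ∈ ℌ, where s := ψ(h) is the continuous functional calculus of h for ψ(x) := 1/(1 + e^{βx}) (i.e. s = ρ(−βh)). -/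
noncomputable section

/-- `𝔥 := ℓ²(ℤ)`, the Hilbert space of square-summable complex-valued functions on `ℤ`. -/
abbrev smallH : Type := lp (fun _ : ℤ => ℂ) 2

/-- `ℌ := 𝔥 ⊕ 𝔥`, the Hilbert space direct sum of `𝔥` with itself. -/
abbrev bigH : Type := WithLp 2 (smallH × smallH)

/-- The `ℝ`-algebra structure obtained by restricting scalars from `ℂ` (port fix: lets the
real continuous functional calculus be found on operators on `𝔥`). -/
instance smallHOpRealAlgebra : Algebra ℝ (smallH →L[ℂ] smallH) :=
  NormedAlgebra.complexToReal.toAlgebra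

/-- The `ℝ`-algebra structure obtained by restricting scalars from `ℂ` (port fix: lets the
real continuous functional calculus be found on operators on `ℌ`). -/
instance bigHOpRealAlgebra : Algebra ℝ (bigH →L[ℂ] bigH) :=
  NormedAlgebra.complexToReal.toAlgebra

/-- `ζ`, the coordinatewise complex conjugation on `𝔥`. -/
def zeta (f : smallH) : smallH := star f

/-- Identification of an element of `ℌ` with a pair. -/
def toPair (x : bigH) : smallH × smallH := WithLp.equiv 2 (smallH × smallH) x

/-- Identification of a pair with an element of `ℌ`. -/
def ofPair (p : smallH × smallH) : bigH := (WithLp.equiv 2 (smallH × smallH)).symm p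

/-- The conjugation `Γ(f, g) := (ζg, ζf)` on `ℌ`. -/
def Gamma (x : bigH) : bigH := ofPair (zeta (toPair x).2, zeta (toPair x).1)

/-- `T` commutes with all gauge transformations `U_φ(f, g) := (e^{iφ}f, e^{−iφ}g)`. -/
def GaugeInvariant (T : bigH →L[ℂ] bigH) : Prop :=
  ∀ (φ : ℝ) (f g : smallH),
    toPair (T (ofPair
        (Complex.exp (Complex.I * φ) • f, Complex.exp (-(Complex.I * φ)) • g))) =
      (Complex.exp (Complex.I * φ) • (toPair (T (ofPair (f, g)))).1,
        Complex.exp (-(Complex.I * φ)) • (toPair (T (ofPair (f, g)))).2)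

/-! Gauge invariance of `T` at `φ = π/2` says that `T` commutes with `U = diag(i, -i)`. As `β ≠ 0`,
the Fermi function `x ↦ ρ(βx)` has the continuous inverse `y ↦ β⁻¹ log (y / (1 - y))` on `(0, 1)`,
so `H` is a continuous function of `T` and commutes with `U` as well. Operators commuting with `U`
are block diagonal, `H = diag(h, k)`, and `ΓHΓ = -H` forces `k = -ζhζ`. Conversely, the functional
calculus of a block-diagonal operator acts blockwise, it commutes with the real `⋆`-automorphism
`X ↦ ζXζ`, and `ρ(βx) = 1 - ρ(-βx)`. -/

@[ext] lemma WithLp.prod_ext {p : ENNReal} {α β : Type*} {x y : WithLp p (α × β)}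
    (h₁ : x.fst = y.fst) (h₂ : x.snd = y.snd) : x = y :=
  WithLp.ofLp_injective p (Prod.ext h₁ h₂)

section BlockDiag

variable {E F : Type*} [NormedAddCommGroup E] [InnerProductSpace ℂ E] [CompleteSpace E]
  [NormedAddCommGroup F] [InnerProductSpace ℂ F] [CompleteSpace F]

def blockDiag : (E →L[ℂ] E) × (F →L[ℂ] F) →⋆ₐ[ℂ] (WithLp 2 (E × F) →L[ℂ] WithLp 2 (E × F)) where
  toFun p := (WithLp.prodContinuousLinearEquiv 2 ℂ E F).symm.toContinuousLinearMap ∘L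
    (p.1.prodMap p.2) ∘L (WithLp.prodContinuousLinearEquiv 2 ℂ E F).toContinuousLinearMap
  map_one' := rfl
  map_mul' _ _ := rfl
  map_zero' := rfl
  map_add' _ _ := rfl
  commutes' _ := rfl
  map_star' p := by
    rw [ContinuousLinearMap.star_eq_adjoint, ContinuousLinearMap.eq_adjoint_iff]
    intro x y
    simp [WithLp.prod_inner_apply, ContinuousLinearMap.star_eq_adjoint,
      ContinuousLinearMap.adjoint_inner_left]

@[simp] lemma blockDiag_apply (p : (E →L[ℂ] E) × (F →L[ℂ] F)) (x : WithLp 2 (E × F)) :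
    blockDiag p x = WithLp.toLp 2 (p.1 x.fst, p.2 x.snd) := rfl

lemma blockDiag_injective :
    Function.Injective (blockDiag : (E →L[ℂ] E) × (F →L[ℂ] F) → _) := by
  intro p q hpq
  ext x
  · simpa using congrArg WithLp.fst (DFunLike.congr_fun hpq (WithLp.toLp 2 (x, 0)))
  · simpa using congrArg WithLp.snd (DFunLike.congr_fun hpq (WithLp.toLp 2 (0, x)))

lemma isSelfAdjoint_blockDiag_iff {p : (E →L[ℂ] E) × (F →L[ℂ] F)} :
    IsSelfAdjoint (blockDiag p) ↔ IsSelfAdjoint p := by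
  simp only [IsSelfAdjoint, ← map_star, blockDiag_injective.eq_iff]

lemma continuous_blockDiag : Continuous (blockDiag : (E →L[ℂ] E) × (F →L[ℂ] F) → _) :=
  continuous_const.clm_comp
    ((ContinuousLinearMap.prodMapL ℂ E E F F).continuous.clm_comp continuous_const)

lemma cfc_blockDiag (f : ℝ → ℝ) {a : E →L[ℂ] E} {b : F →L[ℂ] F} (ha : IsSelfAdjoint a)
    (hb : IsSelfAdjoint b) (hf : ContinuousOn f (spectrum ℝ a ∪ spectrum ℝ b)) :
    cfc f (blockDiag (a, b)) = blockDiag (cfc f a, cfc f b) := by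
  -- `cfc_map_prod` uses `Prod.algebra`, which is not syntactically the `ℝ`-algebra structure
  -- through which `CStarAlgebra` provides the real functional calculus
  let : ContinuousFunctionalCalculus ℝ ((E →L[ℂ] E) × (F →L[ℂ] F)) IsSelfAdjoint :=
    IsSelfAdjoint.instContinuousFunctionalCalculus
  have hab : IsSelfAdjoint (a, b) := Prod.ext ha hb
  rw [← cfc_map_prod (S := ℂ) f a b hf hab ha hb]
  exact (StarAlgHomClass.map_cfc (S := ℂ) blockDiag f (a, b) (by rwa [Prod.spectrum_eq])
    continuous_blockDiag hab (hab.map blockDiag)).symm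

lemma exists_eq_blockDiag_of_commute {X : WithLp 2 (E × F) →L[ℂ] WithLp 2 (E × F)} {c d : ℂ}
    (hcd : c ≠ d) (hX : Commute X (blockDiag (c • 1, d • 1))) : ∃ p, X = blockDiag p := by
  set U := blockDiag ((c • 1 : E →L[ℂ] E), (d • 1 : F →L[ℂ] F))
  -- `X` preserves the eigenspaces `E × 0` and `0 × F` of `U`
  have hXU (x) : X (U x) = U (X x) := DFunLike.congr_fun hX x
  have hsnd (f : E) : (X (WithLp.toLp 2 (f, 0))).snd = 0 := by
    have h := congrArg WithLp.snd (hXU (WithLp.toLp 2 (f, 0)))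
    have hU : U (WithLp.toLp 2 (f, 0)) = c • WithLp.toLp 2 (f, 0) := by ext <;> simp [U]
    rw [hU, map_smul] at h
    simp only [WithLp.smul_snd, blockDiag_apply, smul_apply, one_apply_eq_self, WithLp.toLp_snd,
      U] at h
    exact (smul_eq_zero.mp (by rw [sub_smul, h, sub_self])).resolve_left (sub_ne_zero.mpr hcd)
  have hfst (g : F) : (X (WithLp.toLp 2 (0, g))).fst = 0 := by
    have h := congrArg WithLp.fst (hXU (WithLp.toLp 2 (0, g)))
    have hU : U (WithLp.toLp 2 (0, g)) = d • WithLp.toLp 2 (0, g) := by ext <;> simp [U]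
    rw [hU, map_smul] at h
    simp only [WithLp.smul_fst, blockDiag_apply, smul_apply, one_apply_eq_self, WithLp.toLp_fst,
      U] at h
    exact (smul_eq_zero.mp (by rw [sub_smul, h, sub_self])).resolve_left (sub_ne_zero.mpr hcd.symm)
  let e := WithLp.prodContinuousLinearEquiv 2 ℂ E F
  refine ⟨(ContinuousLinearMap.fst ℂ E F ∘L e.toContinuousLinearMap ∘L X ∘L
      e.symm.toContinuousLinearMap ∘L ContinuousLinearMap.inl ℂ E F,
    ContinuousLinearMap.snd ℂ E F ∘L e.toContinuousLinearMap ∘L X ∘L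
      e.symm.toContinuousLinearMap ∘L ContinuousLinearMap.inr ℂ E F), ?_⟩
  ext x : 1
  have hx : x = WithLp.toLp 2 (x.fst, 0) + WithLp.toLp 2 (0, x.snd) := by ext <;> simp
  conv_lhs => rw [hx]
  ext <;> simp [hsnd, hfst, e]

end BlockDiag

lemma zeta_zeta (f : smallH) : zeta (zeta f) = f := star_star f

lemma inner_zeta_zeta (u v : smallH) : inner ℂ (zeta u) (zeta v) = inner ℂ v u := by
  rw [zeta, zeta, lp.inner_eq_tsum, lp.inner_eq_tsum]
  refine tsum_congr fun i => ?_
  simp [RCLike.inner_apply, mul_comm]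

def zetaConj : (smallH →L[ℂ] smallH) →⋆ₐ[ℝ] (smallH →L[ℂ] smallH) where
  toFun := (starL ℂ).arrowCongrSL (starL ℂ)
  map_one' := by ext; simp
  map_mul' _ _ := by ext; simp
  map_zero' := by ext; simp
  map_add' _ _ := by ext; simp
  commutes' r := by
    ext f : 1
    change zeta ((r : ℂ) • zeta f) = (r : ℂ) • f
    simp [zeta, star_smul]
  map_star' X := by
    rw [ContinuousLinearMap.star_eq_adjoint, ContinuousLinearMap.star_eq_adjoint,
      ContinuousLinearMap.eq_adjoint_iff]
    intro x y
    change inner ℂ (zeta (X.adjoint (zeta x))) y = inner ℂ x (zeta (X (zeta y)))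
    calc inner ℂ (zeta (X.adjoint (zeta x))) y
        = inner ℂ (zeta (X.adjoint (zeta x))) (zeta (zeta y)) := by rw [zeta_zeta]
      _ = inner ℂ (zeta y) (X.adjoint (zeta x)) := inner_zeta_zeta _ _
      _ = inner ℂ (X (zeta y)) (zeta x) := X.adjoint_inner_right _ _
      _ = inner ℂ (zeta (zeta x)) (zeta (X (zeta y))) := (inner_zeta_zeta _ _).symm
      _ = inner ℂ x (zeta (X (zeta y))) := by rw [zeta_zeta]

lemma continuous_zetaConj : Continuous zetaConj :=
  ((starL ℂ).arrowCongrSL (starL ℂ)).continuous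

lemma cfc_zetaConj (f : ℝ → ℝ) {X : smallH →L[ℂ] smallH} (hX : IsSelfAdjoint X)
    (hf : ContinuousOn f (spectrum ℝ X)) : cfc f (zetaConj X) = zetaConj (cfc f X) :=
  -- the `ℝ`-action of `smallHOpRealAlgebra` is not syntactically that of `ContinuousLinearMap`
  have : @IsScalarTower ℝ ℝ (smallH →L[ℂ] smallH) _ Algebra.toSMul Algebra.toSMul :=
    ⟨fun x y z => by simp only [smul_eq_mul, Algebra.smul_def, map_mul, mul_assoc]⟩
  (StarAlgHomClass.map_cfc zetaConj f X hf continuous_zetaConj hX (hX.map _)).symm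

def fermi (β x : ℝ) : ℝ := 1 / (1 + Real.exp (-(β * x)))

def fermiInv (β y : ℝ) : ℝ := β⁻¹ * Real.log (y / (1 - y))

@[fun_prop] lemma continuous_fermi (β : ℝ) : Continuous (fermi β) :=
  continuous_const.div (by fun_prop) fun x => by positivity

lemma fermi_mem_Ioo (β x : ℝ) : fermi β x ∈ Set.Ioo 0 1 := by
  have he := Real.exp_pos (-(β * x))
  refine ⟨by unfold fermi; positivity, ?_⟩
  rw [fermi, div_lt_one (by positivity)]
  linarith

lemma fermi_add_fermi_neg (β x : ℝ) : fermi β x + fermi β (-x) = 1 := by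
  have he := Real.exp_pos (β * x)
  rw [fermi, fermi, mul_neg, neg_neg, Real.exp_neg]
  field_simp
  ring

lemma fermi_neg (β x : ℝ) : fermi β (-x) = 1 / (1 + Real.exp (β * x)) := by
  rw [fermi, mul_neg, neg_neg]

lemma fermiInv_fermi {β : ℝ} (hβ : β ≠ 0) (x : ℝ) : fermiInv β (fermi β x) = x := by
  have hodds : fermi β x / (1 - fermi β x) = Real.exp (β * x) := by
    rw [← eq_sub_of_add_eq' (fermi_add_fermi_neg β x), fermi, fermi, mul_neg, neg_neg,
      Real.exp_neg]
    have he := Real.exp_pos (β * x)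
    field_simp
    ring
  rw [fermiInv, hodds, Real.log_exp, inv_mul_cancel_left₀ hβ]

lemma continuousOn_fermiInv (β : ℝ) : ContinuousOn (fermiInv β) (Set.Ioo 0 1) := by
  refine continuousOn_const.mul (ContinuousOn.log ?_ fun y hy => ?_)
  · exact continuousOn_id.div (continuousOn_const.sub continuousOn_id)
      fun y hy => (sub_pos.mpr hy.2).ne'
  · exact (div_pos hy.1 (sub_pos.mpr hy.2)).ne'

lemma Commute.of_cfc_of_leftInvOn {A : Type*} [Ring A] [StarRing A] [Algebra ℝ A]
    [TopologicalSpace A] [ContinuousFunctionalCalculus ℝ A IsSelfAdjoint] [IsTopologicalRing A]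
    [T2Space A] {f g : ℝ → ℝ} {a b : A} (ha : IsSelfAdjoint a)
    (hgf : Set.LeftInvOn g f (spectrum ℝ a)) (hf : ContinuousOn f (spectrum ℝ a))
    (hg : ContinuousOn g (f '' spectrum ℝ a)) (h : Commute (cfc f a) b) : Commute a b := by
  have hgfa : cfc g (cfc f a) = a := by
    rw [← cfc_comp g f a ha hg hf, cfc_congr (f := g ∘ f) (g := id) hgf, cfc_id ℝ a ha]
  exact hgfa ▸ h.cfc_real g

lemma eq_blockDiag_iff_toPair {X : bigH →L[ℂ] bigH} {a b : smallH →L[ℂ] smallH} :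
    X = blockDiag (a, b) ↔ ∀ f g, toPair (X (ofPair (f, g))) = (a f, b g) := by
  refine ⟨by rintro rfl f g; rfl, fun h => ?_⟩
  ext x : 1
  exact congrArg (WithLp.toLp 2) (h x.fst x.snd)

lemma GaugeInvariant.commute_blockDiag_I {T : bigH →L[ℂ] bigH} (hT : GaugeInvariant T) :
    Commute T (blockDiag (Complex.I • 1, -Complex.I • 1)) := by
  have hI : Complex.exp (Complex.I * ↑(Real.pi / 2)) = Complex.I := by
    rw [mul_comm, Complex.ofReal_div, Complex.ofReal_ofNat, Complex.exp_pi_div_two_mul_I]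
  have h := hT (Real.pi / 2)
  rw [Complex.exp_neg, hI, Complex.inv_I] at h
  ext x : 1
  exact congrArg (WithLp.toLp 2) (h x.fst x.snd)

lemma Gamma_blockDiag_Gamma (a b : smallH →L[ℂ] smallH) (x : bigH) :
    Gamma (blockDiag (a, b) (Gamma x)) = blockDiag (zetaConj b, zetaConj a) x := rfl

lemma eq_neg_zetaConj_of_Gamma {h k : smallH →L[ℂ] smallH}
    (hΓ : ∀ x, Gamma (blockDiag (h, k) (Gamma x)) = -blockDiag (h, k) x) : k = -zetaConj h := by
  have hpair : (zetaConj k, zetaConj h) = -(h, k) := by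
    apply blockDiag_injective
    ext x : 1
    rw [← Gamma_blockDiag_Gamma, hΓ, map_neg, neg_apply]
  rw [show zetaConj h = -k from congrArg Prod.snd hpair, neg_neg]

lemma cfc_fermi_blockDiag_neg_zetaConj (β : ℝ) {h : smallH →L[ℂ] smallH} (hh : IsSelfAdjoint h) :
    cfc (fermi β) (blockDiag (h, -zetaConj h)) =
      blockDiag (1 - cfc (fun x => fermi β (-x)) h, zetaConj (cfc (fun x => fermi β (-x)) h)) := by
  have hfst : cfc (fermi β) h = 1 - cfc (fun x => fermi β (-x)) h := by
    rw [← cfc_const_one ℝ h, ← cfc_sub ..]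
    exact cfc_congr fun x _ => eq_sub_of_add_eq (fermi_add_fermi_neg β x)
  have hsnd : cfc (fermi β) (-zetaConj h) = zetaConj (cfc (fun x => fermi β (-x)) h) := by
    rw [← cfc_comp_neg .., cfc_zetaConj _ hh (by fun_prop)]
  rw [cfc_blockDiag _ hh (hh.map zetaConj).neg (by fun_prop), hfst, hsnd]

/-- Let `β ≠ 0`, `ρ(x) := 1/(1+e^{−x})` the Fermi–Dirac function, `H` a
bounded selfadjoint operator on `ℌ` with `Γ∘H∘Γ = −H`, and `T := ρ(βH)` via the continuous
functional calculus. Then: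
(i) if `T` commutes with all gauge transformations, there is a bounded selfadjoint `h` on `𝔥`
with `H(f, g) = (hf, −ζ(h(ζg)))` for all `(f, g)`;
(ii) conversely, if `H(f, g) = (hf, −ζ(h(ζg)))` for a bounded selfadjoint `h` on `𝔥`, then
`T(f, g) = ((1 − s)f, ζ(s(ζg)))`, where `s := ρ(−βh)`, i.e. `s = ψ(h)` with
`ψ(x) := 1/(1+e^{βx})`. -/
theorem stmt_5 (β : ℝ) (hβ : β ≠ 0)
    (H : bigH →L[ℂ] bigH) (hH_sa : IsSelfAdjoint H)
    (hH_gamma : ∀ x : bigH, Gamma (H (Gamma x)) = -(H x))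
    (T : bigH →L[ℂ] bigH)
    (hT : T = cfc (fun x : ℝ => 1 / (1 + Real.exp (-(β * x)))) H) :
    (GaugeInvariant T →
      ∃ h : smallH →L[ℂ] smallH, IsSelfAdjoint h ∧
        ∀ f g : smallH,
          toPair (H (ofPair (f, g))) = (h f, -zeta (h (zeta g)))) ∧
    (∀ h : smallH →L[ℂ] smallH, IsSelfAdjoint h →
      (∀ f g : smallH,
        toPair (H (ofPair (f, g))) = (h f, -zeta (h (zeta g)))) →
      ∀ f g : smallH,
        toPair (T (ofPair (f, g))) =
          (((1 : smallH →L[ℂ] smallH) - cfc (fun x : ℝ => 1 / (1 + Real.exp (β * x))) h) f,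
            zeta ((cfc (fun x : ℝ => 1 / (1 + Real.exp (β * x))) h) (zeta g)))) := by
  replace hT : T = cfc (fermi β) H := hT
  refine ⟨fun hgauge => ?_, fun h hh hH => ?_⟩
  · have hHU : Commute H (blockDiag (Complex.I • 1, -Complex.I • 1)) :=
      .of_cfc_of_leftInvOn hH_sa (fun x _ => fermiInv_fermi hβ x)
        (continuous_fermi β).continuousOn
        ((continuousOn_fermiInv β).mono (Set.image_subset_iff.mpr fun x _ => fermi_mem_Ioo β x))
        (hT ▸ hgauge.commute_blockDiag_I)
    obtain ⟨⟨h, k⟩, rfl⟩ := exists_eq_blockDiag_of_commute (by norm_num [Complex.ext_iff]) hHU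
    refine ⟨h, congrArg Prod.fst (isSelfAdjoint_blockDiag_iff.mp hH_sa), ?_⟩
    obtain rfl := eq_neg_zetaConj_of_Gamma hH_gamma
    exact eq_blockDiag_iff_toPair.mp rfl
  · replace hH : H = blockDiag (h, -zetaConj h) := eq_blockDiag_iff_toPair.mpr hH
    rw [hH, cfc_fermi_blockDiag_neg_zetaConj β hh] at hT
    simp only [fermi_neg] at hT
    exact eq_blockDiag_iff_toPair.mp hT
end
end

section
/- Let u₀, u₁, u₂ be odd real trigonometric polynomials and u₃ an even real trigonometric polynomial, not all identically zero, and assume: (i) if u₀ is identically zero, then u₁u₁' + u₂u₂' + u₃u₃' is not identically zero; and (ii) if u₀ is not identically zero, then u₀² − (u₁² + u₂² + u₃²) is not identically zero. Define |u|(k) := √(u₁(k)² + u₂(k)² + u₃(k)²), e := u₀ + |u|, and E'(k) := u₀'(k) + (u₁u₁' + u₂u₂' + u₃u₃')(k)/|u|(k) if |u|(k) ≠ 0, E'(k) := u₀'(k) if |u|(k) = 0. Let ρ : ℝ → ℝ be strictly increasing with ρ(x) + ρ(−x) = 1 for all x ∈ ℝ, and let β_L, β_R ∈ ℝ with β_L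 < β_R. Then J := (1/(4π))·∫_{−π}^{π} |e(k)·E'(k)|·(ρ(β_R·|e(k)|) − ρ(β_L·|e(k)|)) dk is strictly positive. -/
/-!
Write `q = u₁² + u₂² + u₃²`, so that `e = u₀ + √q` and, where `q ≠ 0`, `E' = u₀' + q'/(2√q)` is
the derivative of `e`. The integrand is nonnegative and vanishes exactly where `e E' = 0`; since
`e E'` is continuous off the zeros of `q`, it suffices to find one point of `(-π, π)` with `q ≠ 0`
and `e E' ≠ 0` (or, if `q ≡ 0`, one point with `u₀ u₀' ≠ 0`).

Suppose `e E' = 0` wherever `q ≠ 0`. By the parity of the `uᵢ`, `k ↦ -k` turns `e E'` into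
`-(u₀ - √q)(u₀' - q'/(2√q))`, so this product vanishes too. Multiplying out,
`P := u₀² - q = (u₀ + √q)(u₀ - √q)` then satisfies `P (2u₀u₀' - q') = 0` on an open set, hence
everywhere by analyticity. Hypothesis (ii) (or `q ≢ 0` when `u₀ ≡ 0`) gives `P ≢ 0`, so
`q' = 2u₀u₀'`. If `u₀ ≡ 0` this contradicts (i); otherwise `e E' = u₀' e²/√q`, which forces
`P u₀' = 0`, so `u₀' ≡ 0` and the odd function `u₀` vanishes.
-/

open MeasureTheory Real

/-- A real trigonometric polynomial: a function of the form
`k ↦ a₀ + Σ_{n=1}^{N} (aₙ cos(nk) + bₙ sin(nk))` with real coefficients. -/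
def IsRealTrigPoly (f : ℝ → ℝ) : Prop :=
  ∃ (N : ℕ) (a b : ℕ → ℝ), ∀ k : ℝ,
    f k = a 0 + ∑ n ∈ Finset.Icc 1 N, (a n * Real.cos (n * k) + b n * Real.sin (n * k))

open Set Filter Topology

theorem IsRealTrigPoly.analyticOnNhd {f : ℝ → ℝ} (hf : IsRealTrigPoly f) :
    AnalyticOnNhd ℝ f univ := by
  obtain ⟨N, a, b, h⟩ := hf
  rw [show f = _ from funext h]
  intro x _
  fun_prop

theorem IsRealTrigPoly.differentiable {f : ℝ → ℝ} (hf : IsRealTrigPoly f) : Differentiable ℝ f :=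
  differentiableOn_univ.mp hf.analyticOnNhd.differentiableOn

section IdentityPrinciple

variable {𝕜 : Type*} [NontriviallyNormedField 𝕜]

theorem AnalyticOnNhd.eq_zero_of_eqOn_zero {E F : Type*} [NormedAddCommGroup E]
    [NormedSpace 𝕜 E] [PreconnectedSpace E] [NormedAddCommGroup F] [NormedSpace 𝕜 F]
    {f : E → F} (hf : AnalyticOnNhd 𝕜 f univ) {s : Set E} (hs : IsOpen s) (hne : s.Nonempty)
    (h : EqOn f 0 s) : f = 0 := by
  obtain ⟨z, hz⟩ := hne
  funext x
  exact hf.eqOn_zero_of_preconnected_of_eventuallyEq_zero isPreconnected_univ (mem_univ z)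
    (eventually_of_mem (hs.mem_nhds hz) h) (mem_univ x)

theorem AnalyticOnNhd.eq_zero_of_mul_eqOn_zero [PreconnectedSpace 𝕜] {A : Type*} [NormedRing A]
    [IsDomain A] [NormedAlgebra 𝕜 A] {f g : 𝕜 → A} (hf : AnalyticOnNhd 𝕜 f univ)
    (hg : AnalyticOnNhd 𝕜 g univ) {s : Set 𝕜} (hs : IsOpen s) (hne : s.Nonempty)
    (hfg : EqOn (f * g) 0 s) (hf0 : f ≠ 0) : g = 0 := by
  have hfg' := (hf.mul hg).eq_zero_of_eqOn_zero hs hne hfg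
  rcases hf.eq_zero_or_eq_zero_of_mul_eq_zero hg (fun z _ ↦ congrFun hfg' z)
    isPreconnected_univ with h | h
  · exact absurd (funext fun z ↦ h z (mem_univ z)) hf0
  · exact funext fun z ↦ h z (mem_univ z)

end IdentityPrinciple

section Parity

variable {𝕜 F : Type*} [NontriviallyNormedField 𝕜] [NormedAddCommGroup F] [NormedSpace 𝕜 F]
  {f : 𝕜 → F}

theorem Function.Odd.deriv_even (hf : f.Odd) : (deriv f).Even := fun x ↦ by
  have h := deriv_comp_neg f x
  rw [show (fun x ↦ f (-x)) = -f from funext hf, deriv.neg'] at h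
  exact (neg_inj.mp h).symm

theorem Function.Even.deriv_odd (hf : f.Even) : (deriv f).Odd := fun x ↦ by
  have h := deriv_comp_neg f x
  rw [show (fun x ↦ f (-x)) = f from funext hf] at h
  rw [h, neg_neg]

end Parity

theorem Function.Odd.eq_zero_of_deriv_eq_zero {f : ℝ → ℝ} (hf : Differentiable ℝ f)
    (hodd : f.Odd) (h : deriv f = 0) : f = 0 :=
  funext fun x ↦ by simpa [hodd.map_zero] using is_const_of_deriv_eq_zero hf (congrFun h) x 0

theorem abs_add_add_mul_div_sqrt_le (x₁ x₂ x₃ y₁ y₂ y₃ : ℝ) :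
    |x₁ * y₁ + x₂ * y₂ + x₃ * y₃| / √(x₁ ^ 2 + x₂ ^ 2 + x₃ ^ 2) ≤
      √(y₁ ^ 2 + y₂ ^ 2 + y₃ ^ 2) := by
  refine div_le_of_le_mul₀ (sqrt_nonneg _) (sqrt_nonneg _) ?_
  rw [← sqrt_mul (by positivity), ← sqrt_sq_eq_abs]
  apply sqrt_le_sqrt
  nlinarith [sq_nonneg (x₁ * y₂ - x₂ * y₁), sq_nonneg (x₁ * y₃ - x₃ * y₁),
    sq_nonneg (x₂ * y₃ - x₃ * y₂)]

theorem intervalIntegral_pos_of_eventually_pos {f : ℝ → ℝ} {a b c : ℝ}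
    (hfi : IntervalIntegrable f volume a b) (hf : 0 ≤ f) (hc : c ∈ Ioo a b)
    (hpos : ∀ᶠ x in 𝓝 c, 0 < f x) : 0 < ∫ x in a..b, f x := by
  rw [intervalIntegral.integral_pos_iff_support_of_nonneg_ae (.of_forall hf) hfi]
  refine ⟨hc.1.trans hc.2, Measure.measure_pos_of_mem_nhds volume (x := c) ?_⟩
  filter_upwards [hpos, Ioo_mem_nhds hc.1 hc.2] with x hx hx'
  exact ⟨hx.ne', Ioo_subset_Ioc_self hx'⟩

section Bands

noncomputable def upperBand (u₀ q : ℝ → ℝ) (k : ℝ) : ℝ := u₀ k + √(q k)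

/-- For `q = u₁² + u₂² + u₃²` the quotient is `(u₁u₁' + u₂u₂' + u₃u₃') / |u|`. Where `q = 0` it is
`0` (division by zero), so there `upperBandDeriv` is `u₀'`, as in the paper. -/
noncomputable def upperBandDeriv (u₀ q : ℝ → ℝ) (k : ℝ) : ℝ :=
  deriv u₀ k + deriv q k / (2 * √(q k))

variable {u₀ q : ℝ → ℝ}

theorem continuous_upperBand (hu₀ : Continuous u₀) (hq : Continuous q) :
    Continuous (upperBand u₀ q) := by
  unfold upperBand
  fun_prop

theorem measurable_upperBandDeriv (hq : Measurable q) : Measurable (upperBandDeriv u₀ q) := by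
  have := measurable_deriv u₀
  have := measurable_deriv q
  unfold upperBandDeriv
  fun_prop

theorem upperBand_mul_upperBandDeriv_neg (hu₀ : u₀.Odd) (hq : q.Even) (k : ℝ) :
    upperBand u₀ q (-k) * upperBandDeriv u₀ q (-k) =
      -((u₀ k - √(q k)) * (deriv u₀ k - deriv q k / (2 * √(q k)))) := by
  rw [upperBand, upperBandDeriv, hu₀, hq, hu₀.deriv_even, hq.deriv_odd]
  ring

theorem eventually_upperBand_mul_ne_zero (hu₀ : ContDiff ℝ 1 u₀) (hq : ContDiff ℝ 1 q) {c : ℝ}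
    (hqc : 0 < q c) (hc : upperBand u₀ q c * upperBandDeriv u₀ q c ≠ 0) :
    ∀ᶠ k in 𝓝 c, upperBand u₀ q k * upperBandDeriv u₀ q k ≠ 0 := by
  have hsqrt : 2 * √(q c) ≠ 0 := by positivity
  have := hu₀.continuous; have := hq.continuous
  have := hu₀.continuous_deriv le_rfl; have := hq.continuous_deriv le_rfl
  have hcont : ContinuousAt (fun k ↦ upperBand u₀ q k * upperBandDeriv u₀ q k) c := by
    unfold upperBand upperBandDeriv
    fun_prop (disch := exact hsqrt)
  exact hcont.eventually_ne hc

theorem sq_sub_mul_eq_zero_of_mul_eq_zero {a a' n d : ℝ} (hn : n ≠ 0)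
    (hp : (a + n) * (a' + d / (2 * n)) = 0) (hm : (a - n) * (a' - d / (2 * n)) = 0) :
    (a ^ 2 - n ^ 2) * (2 * a * a' - d) = 0 := by
  obtain ⟨t, rfl⟩ : ∃ t, d = 2 * n * t := ⟨d / (2 * n), by field_simp⟩
  rw [mul_div_cancel_left₀ t (by positivity)] at hp hm
  linear_combination (a - n) ^ 2 * hp + (a + n) ^ 2 * hm

theorem sq_sub_mul_eq_zero_of_mul_add_eq_zero {a a' n : ℝ} (hn : n ≠ 0)
    (h : (a + n) * (a' + 2 * a * a' / (2 * n)) = 0) : (a ^ 2 - n ^ 2) * a' = 0 := by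
  have h' : a' * (a + n) ^ 2 = 0 := by
    field_simp at h
    linear_combination h
  have : a' * (a + n) = 0 := pow_eq_zero_iff two_ne_zero |>.mp (by linear_combination a' * h')
  linear_combination (a - n) * this

theorem deriv_eq_of_upperBand_mul_eq_zero (hu₀ : AnalyticOnNhd ℝ u₀ univ) (hu₀odd : u₀.Odd)
    (hq : AnalyticOnNhd ℝ q univ) (hq0 : 0 ≤ q) (hqeven : q.Even) {s : Set ℝ} (hs : IsOpen s)
    (hsymm : ∀ k ∈ s, -k ∈ s) (hne : ∃ k ∈ s, q k ≠ 0) (hP : u₀ ^ 2 - q ≠ 0)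
    (hzero : ∀ k ∈ s, q k ≠ 0 → upperBand u₀ q k * upperBandDeriv u₀ q k = 0) :
    deriv q = 2 * u₀ * deriv u₀ := by
  have hV : IsOpen (s ∩ {k | q k ≠ 0}) := hs.inter (isOpen_ne_fun hq.continuous continuous_const)
  have hPP' : EqOn ((u₀ ^ 2 - q) * (2 * u₀ * deriv u₀ - deriv q)) 0 (s ∩ {k | q k ≠ 0}) := by
    rintro k ⟨hk, hqk : q k ≠ 0⟩
    have hn : √(q k) ≠ 0 := sqrt_ne_zero'.mpr ((hq0 k).lt_of_ne' hqk)
    have hm := hzero (-k) (hsymm k hk) (by rwa [hqeven])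
    rw [upperBand_mul_upperBandDeriv_neg hu₀odd hqeven, neg_eq_zero] at hm
    have := sq_sub_mul_eq_zero_of_mul_eq_zero hn (hzero k hk hqk) hm
    rwa [sq_sqrt (hq0 k)] at this
  have hP' := ((hu₀.pow 2).sub hq).eq_zero_of_mul_eqOn_zero
    (((analyticOnNhd_const.mul hu₀).mul hu₀.deriv).sub hq.deriv) hV hne hPP' hP
  exact (sub_eq_zero.mp hP').symm

theorem eq_zero_of_upperBand_mul_eq_zero (hu₀ : AnalyticOnNhd ℝ u₀ univ) (hu₀odd : u₀.Odd)
    (hq : AnalyticOnNhd ℝ q univ) (hq0 : 0 ≤ q) {s : Set ℝ} (hs : IsOpen s)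
    (hne : ∃ k ∈ s, q k ≠ 0) (hP : u₀ ^ 2 - q ≠ 0) (hq' : deriv q = 2 * u₀ * deriv u₀)
    (hzero : ∀ k ∈ s, q k ≠ 0 → upperBand u₀ q k * upperBandDeriv u₀ q k = 0) : u₀ = 0 := by
  have hV : IsOpen (s ∩ {k | q k ≠ 0}) := hs.inter (isOpen_ne_fun hq.continuous continuous_const)
  have hPu₀' : EqOn ((u₀ ^ 2 - q) * deriv u₀) 0 (s ∩ {k | q k ≠ 0}) := by
    rintro k ⟨hk, hqk : q k ≠ 0⟩
    have hn : √(q k) ≠ 0 := sqrt_ne_zero'.mpr ((hq0 k).lt_of_ne' hqk)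
    have h := hzero k hk hqk
    rw [upperBand, upperBandDeriv, hq'] at h
    have := sq_sub_mul_eq_zero_of_mul_add_eq_zero hn h
    rwa [sq_sqrt (hq0 k)] at this
  exact hu₀odd.eq_zero_of_deriv_eq_zero (differentiableOn_univ.mp hu₀.differentiableOn)
    (((hu₀.pow 2).sub hq).eq_zero_of_mul_eqOn_zero hu₀.deriv hV hne hPu₀' hP)

theorem exists_eventually_upperBand_mul_ne_zero (hu₀ : AnalyticOnNhd ℝ u₀ univ)
    (hu₀odd : u₀.Odd) (hq : AnalyticOnNhd ℝ q univ) (hq0 : 0 ≤ q) (hqeven : q.Even)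
    (hnz : q = 0 → u₀ ≠ 0) (hi : u₀ = 0 → deriv q ≠ 0) (hii : u₀ ≠ 0 → u₀ ^ 2 - q ≠ 0)
    {s : Set ℝ} (hs : IsOpen s) (hsne : s.Nonempty) (hsymm : ∀ k ∈ s, -k ∈ s) :
    ∃ c ∈ s, ∀ᶠ k in 𝓝 c, upperBand u₀ q k * upperBandDeriv u₀ q k ≠ 0 := by
  rcases eq_or_ne q 0 with rfl | hq_ne
  · have hprod (k : ℝ) : upperBand u₀ 0 k * upperBandDeriv u₀ 0 k = (u₀ * deriv u₀) k := by
      simp [upperBand, upperBandDeriv]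
    have hu₀0 := hnz rfl
    obtain ⟨c, hc, hcne⟩ : ∃ c ∈ s, (u₀ * deriv u₀) c ≠ 0 := by
      by_contra! h
      exact hu₀0 (hu₀odd.eq_zero_of_deriv_eq_zero (differentiableOn_univ.mp hu₀.differentiableOn)
        (hu₀.eq_zero_of_mul_eqOn_zero hu₀.deriv hs hsne h hu₀0))
    exact ⟨c, hc, by simpa only [hprod, Pi.mul_apply] using
      (hu₀.mul hu₀.deriv).continuous.continuousAt.eventually_ne hcne⟩
  by_contra H
  have hzero : ∀ k ∈ s, q k ≠ 0 → upperBand u₀ q k * upperBandDeriv u₀ q k = 0 :=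
    fun k hk hqk ↦ by_contra fun h ↦ H ⟨k, hk,
      eventually_upperBand_mul_ne_zero hu₀.contDiff hq.contDiff ((hq0 k).lt_of_ne' hqk) h⟩
  have hne : ∃ k ∈ s, q k ≠ 0 := by
    by_contra! h
    exact hq_ne (hq.eq_zero_of_eqOn_zero hs hsne h)
  have hP : u₀ ^ 2 - q ≠ 0 := by
    rcases eq_or_ne u₀ 0 with rfl | hu₀0
    · simpa using hq_ne
    · exact hii hu₀0
  have hq' := deriv_eq_of_upperBand_mul_eq_zero hu₀ hu₀odd hq hq0 hqeven hs hsymm hne hP hzero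
  rcases eq_or_ne u₀ 0 with rfl | hu₀0
  · exact hi rfl (by simpa using hq')
  · exact hu₀0 (eq_zero_of_upperBand_mul_eq_zero hu₀ hu₀odd hq hq0 hs hne hP hq' hzero)

end Bands

section SumOfSquares

noncomputable def sumSq (u₁ u₂ u₃ : ℝ → ℝ) (k : ℝ) : ℝ := u₁ k ^ 2 + u₂ k ^ 2 + u₃ k ^ 2

variable {u₀ u₁ u₂ u₃ : ℝ → ℝ}

theorem sumSq_nonneg : 0 ≤ sumSq u₁ u₂ u₃ := fun k ↦ by
  unfold sumSq
  positivity

theorem sumSq_even (h₁ : u₁.Odd) (h₂ : u₂.Odd) (h₃ : u₃.Even) : (sumSq u₁ u₂ u₃).Even :=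
  fun k ↦ by simp only [sumSq, h₁ k, h₂ k, h₃ k, neg_sq]

theorem sumSq_eq_zero_iff {k : ℝ} :
    sumSq u₁ u₂ u₃ k = 0 ↔ u₁ k = 0 ∧ u₂ k = 0 ∧ u₃ k = 0 := by
  simp only [sumSq]
  constructor
  · intro h
    refine ⟨?_, ?_, ?_⟩ <;> apply pow_eq_zero_iff two_ne_zero |>.mp <;>
      nlinarith [sq_nonneg (u₁ k), sq_nonneg (u₂ k), sq_nonneg (u₃ k)]
  · rintro ⟨h₁, h₂, h₃⟩
    simp [h₁, h₂, h₃]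

theorem AnalyticOnNhd.sumSq {s : Set ℝ} (h₁ : AnalyticOnNhd ℝ u₁ s) (h₂ : AnalyticOnNhd ℝ u₂ s)
    (h₃ : AnalyticOnNhd ℝ u₃ s) : AnalyticOnNhd ℝ (sumSq u₁ u₂ u₃) s :=
  ((h₁.pow 2).add (h₂.pow 2)).add (h₃.pow 2)

theorem deriv_sumSq (h₁ : Differentiable ℝ u₁) (h₂ : Differentiable ℝ u₂)
    (h₃ : Differentiable ℝ u₃) (k : ℝ) :
    deriv (sumSq u₁ u₂ u₃) k =
      2 * (u₁ k * deriv u₁ k + u₂ k * deriv u₂ k + u₃ k * deriv u₃ k) := by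
  have := (((h₁ k).hasDerivAt.pow 2).add ((h₂ k).hasDerivAt.pow 2)).add ((h₃ k).hasDerivAt.pow 2)
  exact this.deriv.trans (by push_cast; ring)

theorem abs_upperBandDeriv_sumSq_le (h₁ : Differentiable ℝ u₁) (h₂ : Differentiable ℝ u₂)
    (h₃ : Differentiable ℝ u₃) (k : ℝ) :
    |upperBandDeriv u₀ (sumSq u₁ u₂ u₃) k| ≤
      |deriv u₀ k| + √(sumSq (deriv u₁) (deriv u₂) (deriv u₃) k) := by
  rw [upperBandDeriv, deriv_sumSq h₁ h₂ h₃, mul_div_mul_left _ _ two_ne_zero]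
  refine (abs_add_le _ _).trans (add_le_add le_rfl ?_)
  rw [abs_div, abs_of_nonneg (sqrt_nonneg _)]
  exact abs_add_add_mul_div_sqrt_le _ _ _ _ _ _

end SumOfSquares

section HeatFlux

noncomputable def heatFluxDensity (ρ : ℝ → ℝ) (βL βR x y : ℝ) : ℝ :=
  |x * y| * (ρ (βR * |x|) - ρ (βL * |x|))

variable {ρ : ℝ → ℝ} {βL βR : ℝ}

theorem heatFluxDensity_nonneg (hρ : Monotone ρ) (hβ : βL ≤ βR) (x y : ℝ) :
    0 ≤ heatFluxDensity ρ βL βR x y :=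
  mul_nonneg (abs_nonneg _) (sub_nonneg.mpr (hρ (mul_le_mul_of_nonneg_right hβ (abs_nonneg x))))

theorem heatFluxDensity_pos (hρ : StrictMono ρ) (hβ : βL < βR) {x y : ℝ} (hxy : x * y ≠ 0) :
    0 < heatFluxDensity ρ βL βR x y :=
  mul_pos (abs_pos.mpr hxy) (sub_pos.mpr
    (hρ (mul_lt_mul_of_pos_right hβ (abs_pos.mpr (left_ne_zero_of_mul hxy)))))

theorem Monotone.abs_le_max_of_abs_le (hρ : Monotone ρ) {x M : ℝ} (hx : |x| ≤ M) :
    |ρ x| ≤ max |ρ (-M)| |ρ M| :=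
  abs_le_max_abs_abs (hρ (neg_le_of_abs_le hx)) (hρ (le_of_abs_le hx))

theorem intervalIntegrable_heatFluxDensity {e E' B : ℝ → ℝ} (hρ : Monotone ρ) (he : Continuous e)
    (hE' : Measurable E') (hB : Continuous B) (hE'B : ∀ k, |E' k| ≤ B k) (a b : ℝ) :
    IntervalIntegrable (fun k ↦ heatFluxDensity ρ βL βR (e k) (E' k)) volume a b := by
  obtain ⟨Me, hMe⟩ := isCompact_uIcc.exists_bound_of_continuousOn he.continuousOn
  obtain ⟨MB, hMB⟩ := isCompact_uIcc.exists_bound_of_continuousOn hB.continuousOn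
  have hρe (β : ℝ) {k : ℝ} (hk : k ∈ uIcc a b) :
      |ρ (β * |e k|)| ≤ max |ρ (-(|β| * Me))| |ρ (|β| * Me)| := by
    refine hρ.abs_le_max_of_abs_le ?_
    rw [abs_mul, abs_abs]
    exact mul_le_mul_of_nonneg_left (hMe k hk) (abs_nonneg β)
  refine (intervalIntegrable_const (c := Me * MB * (max |ρ (-(|βR| * Me))| |ρ (|βR| * Me)| +
    max |ρ (-(|βL| * Me))| |ρ (|βL| * Me)|))).mono_fun' ?_ ?_
  · have hm (β : ℝ) : Measurable fun k ↦ ρ (β * |e k|) :=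
      hρ.measurable.comp (measurable_const.mul he.measurable.abs)
    exact ((he.measurable.mul hE').abs.mul ((hm βR).sub (hm βL))).aestronglyMeasurable
  · refine ae_restrict_of_forall_mem measurableSet_uIoc fun k hk ↦ ?_
    have hk' := uIoc_subset_uIcc hk
    have hEk : |E' k| ≤ MB := (hE'B k).trans ((le_abs_self _).trans (hMB k hk'))
    dsimp only
    rw [heatFluxDensity, Real.norm_eq_abs, abs_mul, abs_abs, abs_mul]
    exact mul_le_mul (mul_le_mul (hMe k hk') hEk (abs_nonneg _) ((abs_nonneg _).trans (hMe k hk')))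
      ((abs_sub _ _).trans (add_le_add (hρe βR hk') (hρe βL hk'))) (abs_nonneg _)
      (mul_nonneg ((abs_nonneg _).trans (hMe k hk')) ((abs_nonneg _).trans hEk))

end HeatFlux

theorem stmt_19_general (u₀ u₁ u₂ u₃ : ℝ → ℝ)
    (h₀ : IsRealTrigPoly u₀) (h₁ : IsRealTrigPoly u₁)
    (h₂ : IsRealTrigPoly u₂) (h₃ : IsRealTrigPoly u₃)
    (hodd₀ : ∀ k : ℝ, u₀ (-k) = -u₀ k)
    (hodd₁ : ∀ k : ℝ, u₁ (-k) = -u₁ k)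
    (hodd₂ : ∀ k : ℝ, u₂ (-k) = -u₂ k)
    (heven₃ : ∀ k : ℝ, u₃ (-k) = u₃ k)
    (hnz : ¬ ∀ k : ℝ, u₀ k = 0 ∧ u₁ k = 0 ∧ u₂ k = 0 ∧ u₃ k = 0)
    (hyp_i : (∀ k : ℝ, u₀ k = 0) →
      ¬ ∀ k : ℝ, u₁ k * deriv u₁ k + u₂ k * deriv u₂ k + u₃ k * deriv u₃ k = 0)
    (hyp_ii : (¬ ∀ k : ℝ, u₀ k = 0) →
      ¬ ∀ k : ℝ, u₀ k ^ 2 - (u₁ k ^ 2 + u₂ k ^ 2 + u₃ k ^ 2) = 0)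
    (normu e E' : ℝ → ℝ)
    (hnormu : ∀ k : ℝ, normu k = Real.sqrt (u₁ k ^ 2 + u₂ k ^ 2 + u₃ k ^ 2))
    (he : ∀ k : ℝ, e k = u₀ k + normu k)
    (hE' : ∀ k : ℝ, E' k =
      if normu k = 0 then deriv u₀ k
      else deriv u₀ k +
        (u₁ k * deriv u₁ k + u₂ k * deriv u₂ k + u₃ k * deriv u₃ k) / normu k)
    (ρ : ℝ → ℝ) (hρ_mono : StrictMono ρ)
    (βL βR : ℝ) (hβ : βL < βR) :
    0 < (1 / (4 * π)) *
      ∫ k in (-π)..π, |e k * E' k| * (ρ (βR * |e k|) - ρ (βL * |e k|)) := by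
  have hA₀ := h₀.analyticOnNhd
  have hq := h₁.analyticOnNhd.sumSq h₂.analyticOnNhd h₃.analyticOnNhd
  have hq' := deriv_sumSq h₁.differentiable h₂.differentiable h₃.differentiable
  obtain rfl : e = upperBand u₀ (sumSq u₁ u₂ u₃) := funext fun k ↦ by rw [he, hnormu]; rfl
  obtain rfl : E' = upperBandDeriv u₀ (sumSq u₁ u₂ u₃) := funext fun k ↦ by
    rw [hE', hnormu, upperBandDeriv, hq', mul_div_mul_left _ _ two_ne_zero]
    split_ifs with h <;> simp [sumSq, h]
  obtain ⟨c, hc, hcne⟩ := exists_eventually_upperBand_mul_ne_zero (s := Ioo (-π) π) hA₀ hodd₀ hq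
    sumSq_nonneg (sumSq_even hodd₁ hodd₂ heven₃)
    (fun hq0 hu₀ ↦ hnz fun k ↦ ⟨congrFun hu₀ k, sumSq_eq_zero_iff.mp (congrFun hq0 k)⟩)
    (fun hu₀ hq0 ↦ hyp_i (congrFun hu₀) fun k ↦ by simpa [hq'] using congrFun hq0 k)
    (fun hu₀ hP ↦ hyp_ii (fun h ↦ hu₀ (funext h)) (congrFun hP))
    isOpen_Ioo ⟨0, by simp [pi_pos]⟩ (fun k hk ↦ ⟨neg_lt_neg hk.2, neg_lt.mp hk.1⟩)
  have hB : Continuous fun k ↦ |deriv u₀ k| + √(sumSq (deriv u₁) (deriv u₂) (deriv u₃) k) :=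
    hA₀.deriv.continuous.abs.add
      (h₁.analyticOnNhd.deriv.sumSq h₂.analyticOnNhd.deriv h₃.analyticOnNhd.deriv).continuous.sqrt
  refine mul_pos (by positivity) (intervalIntegral_pos_of_eventually_pos ?_
    (fun k ↦ heatFluxDensity_nonneg hρ_mono.monotone hβ.le _ _) hc
    (hcne.mono fun k hk ↦ heatFluxDensity_pos hρ_mono hβ hk))
  exact intervalIntegrable_heatFluxDensity hρ_mono.monotone
    (continuous_upperBand hA₀.continuous hq.continuous)
    (measurable_upperBandDeriv hq.continuous.measurable) hB
    (abs_upperBandDeriv_sumSq_le h₁.differentiable h₂.differentiable h₃.differentiable) _ _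

/-- Strict positivity of the R/L mover heat flux.  Let `u₀, u₁, u₂` be odd
and `u₃` an even real trigonometric polynomial, not all identically zero, and assume (i) if
`u₀ ≡ 0` then `uu' := u₁u₁' + u₂u₂' + u₃u₃'` is not identically zero, and (ii) if `u₀ ≢ 0`
then `u₀² − (u₁² + u₂² + u₃²)` is not identically zero.  Define `|u| := √(u₁²+u₂²+u₃²)`,
`e := u₀ + |u|`, and `E' := u₀' + uu'/|u|` where `|u| ≠ 0`, `E' := u₀'` where `|u| = 0`.  Let
`ρ : ℝ → ℝ` be strictly increasing with `ρ(x) + ρ(−x) = 1`, and let `β_L < β_R`.  Then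
`J := (1/(4π))·∫_{−π}^{π} |e(k)·E'(k)|·(ρ(β_R·|e(k)|) − ρ(β_L·|e(k)|)) dk > 0`. -/
theorem stmt_19 (u₀ u₁ u₂ u₃ : ℝ → ℝ)
    (h₀ : IsRealTrigPoly u₀) (h₁ : IsRealTrigPoly u₁)
    (h₂ : IsRealTrigPoly u₂) (h₃ : IsRealTrigPoly u₃)
    (hodd₀ : ∀ k : ℝ, u₀ (-k) = -u₀ k)
    (hodd₁ : ∀ k : ℝ, u₁ (-k) = -u₁ k)
    (hodd₂ : ∀ k : ℝ, u₂ (-k) = -u₂ k)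
    (heven₃ : ∀ k : ℝ, u₃ (-k) = u₃ k)
    (hnz : ¬ ∀ k : ℝ, u₀ k = 0 ∧ u₁ k = 0 ∧ u₂ k = 0 ∧ u₃ k = 0)
    (hyp_i : (∀ k : ℝ, u₀ k = 0) →
      ¬ ∀ k : ℝ, u₁ k * deriv u₁ k + u₂ k * deriv u₂ k + u₃ k * deriv u₃ k = 0)
    (hyp_ii : (¬ ∀ k : ℝ, u₀ k = 0) →
      ¬ ∀ k : ℝ, u₀ k ^ 2 - (u₁ k ^ 2 + u₂ k ^ 2 + u₃ k ^ 2) = 0)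
    (normu e E' : ℝ → ℝ)
    (hnormu : ∀ k : ℝ, normu k = Real.sqrt (u₁ k ^ 2 + u₂ k ^ 2 + u₃ k ^ 2))
    (he : ∀ k : ℝ, e k = u₀ k + normu k)
    (hE' : ∀ k : ℝ, E' k =
      if normu k = 0 then deriv u₀ k
      else deriv u₀ k +
        (u₁ k * deriv u₁ k + u₂ k * deriv u₂ k + u₃ k * deriv u₃ k) / normu k)
    (ρ : ℝ → ℝ) (hρ_mono : StrictMono ρ) (hρ_fermi : ∀ x : ℝ, ρ x + ρ (-x) = 1)
    (βL βR : ℝ) (hβ : βL < βR) :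
    0 < (1 / (4 * π)) *
      ∫ k in (-π)..π, |e k * E' k| * (ρ (βR * |e k|) - ρ (βL * |e k|)) :=
  stmt_19_general u₀ u₁ u₂ u₃ h₀ h₁ h₂ h₃ hodd₀ hodd₁ hodd₂ heven₃ hnz hyp_i hyp_ii normu e E'
    hnormu he hE' ρ hρ_mono βL βR hβ
end
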